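/- arXiv:2605.15414 — 2 statements merged into one kernel-verified Lean document; each statement's English description precedes it below -/
import Mathlib

section
/- Let p > 2, s ∈ [1, p-1), and Γ > 0. Then there exists N ∈ ℕ such that Σ_{k=1}^N (1/(2k·2^k))·2^{k(p-s)} > Γ·((Σ_{k=1}^N 1/k)/(2 - Σ_{k=1}^N 1/(k·2^k)))^p·(1 - Σ_{k=1}^N 1/(2k·2^k))^s. -/
/-!
The right-hand side is at most `Γ N ^ p`: the harmonic sum is at most `N`, the denominator
`2 - ∑ 1 / (k 2 ^ k)` is at least `1`, and the last factor lies in `[0, 1]`. The left-hand side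
is at least its last term `2 ^ (N (p - s - 1)) / (2 N)`, which grows exponentially because
`p - s - 1 > 0`, so it eventually exceeds `Γ N ^ p`.
-/

open Finset Filter Real

lemma sum_Icc_one_half_pow (N : ℕ) : ∑ k ∈ Icc 1 N, (1 / 2 : ℝ) ^ k = 1 - (1 / 2) ^ N := by
  induction N with
  | zero => simp
  | succ n ih =>
    rw [sum_Icc_succ_top (by omega), ih]
    ring

lemma sum_Icc_one_div_le (N : ℕ) : ∑ k ∈ Icc 1 N, (1 : ℝ) / k ≤ N := by
  calc ∑ k ∈ Icc 1 N, (1 : ℝ) / k ≤ ∑ _k ∈ Icc 1 N, (1 : ℝ) := by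
        refine sum_le_sum fun k hk => div_le_one_of_le₀ ?_ k.cast_nonneg
        exact_mod_cast (mem_Icc.mp hk).1
    _ = N := by simp

lemma sum_Icc_one_div_mul_two_pow_le_one (N : ℕ) :
    ∑ k ∈ Icc 1 N, (1 : ℝ) / (k * 2 ^ k) ≤ 1 := by
  calc ∑ k ∈ Icc 1 N, (1 : ℝ) / (k * 2 ^ k) ≤ ∑ k ∈ Icc 1 N, (1 / 2 : ℝ) ^ k := by
        refine sum_le_sum fun k hk => ?_
        have hk : (1 : ℝ) ≤ k := by exact_mod_cast (mem_Icc.mp hk).1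
        rw [div_pow, one_pow]
        gcongr
        exact le_mul_of_one_le_left (by positivity) hk
    _ = 1 - (1 / 2) ^ N := sum_Icc_one_half_pow N
    _ ≤ 1 := sub_le_self _ (by positivity)

lemma sum_Icc_one_div_two_mul_mul_two_pow_le_one (N : ℕ) :
    ∑ k ∈ Icc 1 N, (1 : ℝ) / (2 * k * 2 ^ k) ≤ 1 := by
  refine le_trans (sum_le_sum fun k hk => ?_) (sum_Icc_one_div_mul_two_pow_le_one N)
  have hk : (0 : ℝ) < k := by exact_mod_cast (mem_Icc.mp hk).1
  rw [mul_assoc]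
  exact one_div_le_one_div_of_le (by positivity) (le_mul_of_one_le_left (by positivity) one_le_two)

lemma one_div_two_mul_mul_two_pow_mul_rpow (k : ℕ) (t : ℝ) (hk : k ≠ 0) :
    1 / (2 * (k : ℝ) * 2 ^ k) * (2 : ℝ) ^ ((k : ℝ) * t) = 2 ^ ((k : ℝ) * (t - 1)) / (2 * k) := by
  have hsplit : (2 : ℝ) ^ ((k : ℝ) * t) = 2 ^ ((k : ℝ) * (t - 1)) * 2 ^ k := by
    rw [← rpow_natCast 2 k, ← rpow_add two_pos]
    ring_nf
  rw [hsplit]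
  field_simp

lemma eventually_mul_rpow_lt_two_rpow {ε : ℝ} (hε : 0 < ε) (C a : ℝ) :
    ∀ᶠ x : ℝ in atTop, C * x ^ a < 2 ^ (x * ε) := by
  have hb : 0 < ε * log 2 := mul_pos hε (log_pos one_lt_two)
  have hlim := (tendsto_rpow_mul_exp_neg_mul_atTop_nhds_zero a _ hb).const_mul C
  rw [mul_zero] at hlim
  filter_upwards [hlim.eventually_lt_const one_pos] with x hx
  calc C * x ^ a = C * (x ^ a * exp (-(ε * log 2) * x)) * exp (ε * log 2 * x) := by
        rw [mul_assoc, mul_assoc, ← exp_add, neg_mul, neg_add_cancel, exp_zero, mul_one]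
    _ < 1 * exp (ε * log 2 * x) := by gcongr
    _ = 2 ^ (x * ε) := by
        rw [one_mul, rpow_def_of_pos two_pos]
        ring_nf

theorem stmt7 (p s Γ : ℝ) (hp : 2 < p) (hs1 : 1 ≤ s) (hs2 : s < p - 1) (hΓ : 0 < Γ) :
    ∃ N : ℕ, 1 ≤ N ∧
      (∑ k ∈ Finset.Icc 1 N, (1 / (2 * (k : ℝ) * 2 ^ k)) * (2 : ℝ) ^ ((k : ℝ) * (p - s)))
        > Γ * ((∑ k ∈ Finset.Icc 1 N, (1 : ℝ) / k) /
            (2 - ∑ k ∈ Finset.Icc 1 N, (1 : ℝ) / (k * 2 ^ k))) ^ p *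
          (1 - ∑ k ∈ Finset.Icc 1 N, (1 : ℝ) / (2 * k * 2 ^ k)) ^ s := by
  obtain ⟨N, hN1, hgrowth⟩ :
      ∃ N : ℕ, 1 ≤ N ∧ 2 * Γ * (N : ℝ) ^ (p + 1) < 2 ^ ((N : ℝ) * (p - s - 1)) :=
    ((eventually_ge_atTop 1).and (tendsto_natCast_atTop_atTop.eventually
      (eventually_mul_rpow_lt_two_rpow (by linarith) (2 * Γ) (p + 1)))).exists
  refine ⟨N, hN1, ?_⟩
  have hN : (0 : ℝ) < N := by exact_mod_cast hN1
  have hD := sum_Icc_one_div_mul_two_pow_le_one N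
  have hE := sum_Icc_one_div_two_mul_mul_two_pow_le_one N
  have hratio : (∑ k ∈ Icc 1 N, (1 : ℝ) / k) / (2 - ∑ k ∈ Icc 1 N, (1 : ℝ) / (k * 2 ^ k)) ≤ N :=
    (div_le_self (by positivity) (by linarith)).trans (sum_Icc_one_div_le N)
  have hlast_term : 2 ^ ((N : ℝ) * (p - s - 1)) / (2 * N) ≤
      ∑ k ∈ Icc 1 N, (1 / (2 * (k : ℝ) * 2 ^ k)) * (2 : ℝ) ^ ((k : ℝ) * (p - s)) := by
    rw [← one_div_two_mul_mul_two_pow_mul_rpow N (p - s) (by omega)]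
    exact single_le_sum (f := fun k : ℕ => 1 / (2 * (k : ℝ) * 2 ^ k) * 2 ^ ((k : ℝ) * (p - s)))
      (fun k _ => by positivity) (by simp [hN1])
  calc Γ * ((∑ k ∈ Icc 1 N, (1 : ℝ) / k) / (2 - ∑ k ∈ Icc 1 N, (1 : ℝ) / (k * 2 ^ k))) ^ p *
        (1 - ∑ k ∈ Icc 1 N, (1 : ℝ) / (2 * k * 2 ^ k)) ^ s
      ≤ Γ * (N : ℝ) ^ p * 1 := by
        gcongr
        · exact div_nonneg (by positivity) (by linarith)
        · exact rpow_le_one (by linarith) (sub_le_self _ (by positivity)) (by linarith)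
    _ < 2 ^ ((N : ℝ) * (p - s - 1)) / (2 * N) := by
        rw [lt_div_iff₀ (by positivity)]
        rw [rpow_add_one hN.ne'] at hgrowth
        linarith
    _ ≤ _ := hlast_term
end

section
/- Let Ω ⊂ ℝⁿ be open and suppose Ω = ⋃_i W_i ∪ 𝒩 where the W_i are pairwise disjoint open cubes with diam(W_i) ≤ (1/100)·dist(W_i, Ωᶜ) and 𝒩 has measure zero. Then for every cube C with C ∩ Ωᶜ ≠ ∅, the sum Σ_{i : C ∩ W_i ≠ ∅} |W_i| ≤ Λ·|C| for a constant Λ depending only on n. -/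
open MeasureTheory Metric

/-- The open axis-parallel cube in `ℝⁿ` with center `c` and half side-length `ρ`. -/
def openCube {n : ℕ} (c : Fin n → ℝ) (ρ : ℝ) : Set (Fin n → ℝ) :=
  {x | ∀ i, |x i - c i| < ρ}

lemma openCube_eq_ball {n : ℕ} (c : Fin n → ℝ) {ρ : ℝ} (hρ : 0 < ρ) :
    openCube c ρ = Metric.ball c ρ := by
  ext x
  simp [openCube, Metric.mem_ball, dist_pi_lt_iff hρ, Real.dist_eq]

theorem stmt9 (n : ℕ) (hn : 1 ≤ n) :
    ∃ Λ : ℝ, 0 < Λ ∧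
      ∀ (Ω : Set (Fin n → ℝ)), IsOpen Ω →
      ∀ (c : ℕ → Fin n → ℝ) (ρ : ℕ → ℝ),
        (∀ i, 0 < ρ i) →
        (∀ i, openCube (c i) (ρ i) ⊆ Ω) →
        (Pairwise fun i j => Disjoint (openCube (c i) (ρ i)) (openCube (c j) (ρ j))) →
        volume (Ω \ ⋃ i, openCube (c i) (ρ i)) = 0 →
        (∀ i, ∀ x ∈ openCube (c i) (ρ i),
          diam (openCube (c i) (ρ i)) ≤ (1 / 100) * infDist x Ωᶜ) →
        ∀ (C : Fin n → ℝ) (R : ℝ), 0 < R → (openCube C R ∩ Ωᶜ).Nonempty →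
          ∑' i : {i : ℕ // (openCube C R ∩ openCube (c i) (ρ i)).Nonempty},
              volume (openCube (c i.1) (ρ i.1))
            ≤ ENNReal.ofReal Λ * volume (openCube C R) := by
  refine ⟨2 ^ n, by positivity, ?_⟩
  intro Ω hΩ c ρ hρ hsub hdisj hnull hdiam C R hR hCne
  obtain ⟨y, hyC, hyΩc⟩ := hCne
  -- every cube meeting C is contained in ball C (2R)
  have key : ∀ i : {i : ℕ // (openCube C R ∩ openCube (c i) (ρ i)).Nonempty},
      openCube (c i.1) (ρ i.1) ⊆ Metric.ball C (2 * R) := by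
    rintro ⟨i, x, hxC, hxW⟩ w hw
    have hxball : x ∈ Metric.ball C R := by rwa [openCube_eq_ball C hR] at hxC
    have hyball : y ∈ Metric.ball C R := by rwa [openCube_eq_ball C hR] at hyC
    have hinf : infDist x Ωᶜ ≤ dist x y := infDist_le_dist_of_mem hyΩc
    have hxy : dist x y < 2 * R := by
      calc dist x y ≤ dist x C + dist C y := dist_triangle _ _ _
        _ < R + R := by
            rw [Metric.mem_ball] at hxball hyball
            rw [dist_comm C y]; linarith
        _ = 2 * R := by ring
    have hdW : diam (openCube (c i) (ρ i)) ≤ (1 / 100) * (2 * R) := by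
      calc diam (openCube (c i) (ρ i)) ≤ (1 / 100) * infDist x Ωᶜ := hdiam i x hxW
        _ ≤ (1 / 100) * (2 * R) := by
            have := hinf.trans hxy.le
            nlinarith
    have hbdd : Bornology.IsBounded (openCube (c i) (ρ i)) := by
      rw [openCube_eq_ball _ (hρ i)]; exact isBounded_ball
    have hwx : dist w x ≤ diam (openCube (c i) (ρ i)) := dist_le_diam_of_mem hbdd hw hxW
    rw [Metric.mem_ball]
    calc dist w C ≤ dist w x + dist x C := dist_triangle _ _ _
      _ < (1 / 100) * (2 * R) + R := by
          rw [Metric.mem_ball] at hxball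
          linarith [hwx.trans hdW]
      _ < 2 * R := by linarith
  -- disjointness on the subtype
  have hdisj' : Pairwise (Function.onFun Disjoint fun
      i : {i : ℕ // (openCube C R ∩ openCube (c i) (ρ i)).Nonempty} =>
        openCube (c i.1) (ρ i.1)) := by
    intro i j hij
    exact hdisj (fun h => hij (Subtype.ext h))
  have hmeas : ∀ i : {i : ℕ // (openCube C R ∩ openCube (c i) (ρ i)).Nonempty},
      MeasurableSet (openCube (c i.1) (ρ i.1)) := by
    intro i
    rw [openCube_eq_ball _ (hρ i.1)]
    exact measurableSet_ball
  calc ∑' i : {i : ℕ // (openCube C R ∩ openCube (c i) (ρ i)).Nonempty},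
        volume (openCube (c i.1) (ρ i.1))
      = volume (⋃ i : {i : ℕ // (openCube C R ∩ openCube (c i) (ρ i)).Nonempty},
          openCube (c i.1) (ρ i.1)) := (measure_iUnion hdisj' hmeas).symm
    _ ≤ volume (Metric.ball C (2 * R)) := measure_mono (Set.iUnion_subset key)
    _ = ENNReal.ofReal ((2 * (2 * R)) ^ Fintype.card (Fin n)) :=
        Real.volume_pi_ball C (by positivity)
    _ = ENNReal.ofReal (2 ^ n) * volume (openCube C R) := by
        rw [openCube_eq_ball C hR, Real.volume_pi_ball C hR, Fintype.card_fin,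
          ← ENNReal.ofReal_mul (by positivity)]
        congr 1
        rw [mul_pow, mul_pow]
end
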